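/- Let V, M, M' be finite-dimensional 𝔽₂-vector spaces, where M carries endomorphisms w, z with w∘w = 0, z∘z = 0, w∘z + z∘w = id, and M' carries endomorphisms w', z' with w'∘w' = 0, z'∘z' = 0, w'∘z' + z'∘w' = id. Let k : V →ₗ M and f : M →ₗ M' be linear maps, and S : M →ₗ M, S' : M' →ₗ M' endomorphisms, satisfying: (i) f ∘ w = w' ∘ f and f ∘ z = z' ∘ f; (ii) S(k(x)) = k(x) for all x ∈ V; (iii) S' ∘ f + f ∘ S = f; (iv) S ∘ (w ∘ z) + (w ∘ z) ∘ S = w + z and S' ∘ (w' ∘ z') + (w' ∘ z') ∘ S' = w' + z'; (v) M = (w ∘ z)(range k) + (z ∘ w)(range k). Then rank f = 2 · rank (f ∘ k), and moreover ker f is the internal direct sum of (w ∘ z)(K) and (z ∘ w)(K), where K := ker f ⊓ range k. -/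

import Mathlib

/-!
For `w² = z² = 0`, `wz + zw = 1`, the maps `wz` and `zw = 1 - wz` are complementary
idempotents, so `wz(A) ⊓ zw(B) = 0` for all submodules `A, B`. If moreover
`S(wz) + (wz)S = w + z` and `S y = 0`, then `wz y = 0` or `wz y = y` forces `w y + z y = 0`,
whence `y = 0`: both idempotents are injective on `ker S`.

The hypotheses on `S, S'` put `Q = f(range k)` inside `ker S'`, and `f` intertwines the
idempotents, so `range f = w'z'(Q) ⊕ z'w'(Q)` with both summands isomorphic to `Q`. If
`wz a + zw b ∈ ker f` with `a, b ∈ range k`, then `w'z'(f a) + z'w'(f b) = 0`, so both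
summands vanish and injectivity on `Q` gives `f a = f b = 0`.
-/

open Module LinearMap

universe u

section OmegaOne

variable {R M : Type*} [Ring R] [AddCommGroup M] [Module R M] {w z S : M →ₗ[R] M}

theorem apply_apply_of_comp_eq_zero {f g : M →ₗ[R] M} (h : f ∘ₗ g = 0) (x : M) :
    f (g x) = 0 := by
  simpa using congr($h x)

theorem wz_add_zw_apply (hwz : w ∘ₗ z + z ∘ₗ w = LinearMap.id) (x : M) :
    w (z x) + z (w x) = x := by
  simpa using congr($hwz x)

theorem zwz_apply (hz : z ∘ₗ z = 0) (hwz : w ∘ₗ z + z ∘ₗ w = LinearMap.id) (x : M) :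
    z (w (z x)) = z x := by
  simpa [apply_apply_of_comp_eq_zero hz] using wz_add_zw_apply hwz (z x)

theorem disjoint_range_wz_range_zw (hz : z ∘ₗ z = 0) (hwz : w ∘ₗ z + z ∘ₗ w = LinearMap.id) :
    Disjoint (range (w ∘ₗ z)) (range (z ∘ₗ w)) := by
  rw [Submodule.disjoint_def]
  rintro _ ⟨a, rfl⟩ ⟨b, hb⟩
  simp only [comp_apply] at hb ⊢
  calc w (z a) = w (z (w (z a))) := by rw [zwz_apply hz hwz]
    _ = 0 := by rw [← hb, apply_apply_of_comp_eq_zero hz, map_zero]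

theorem map_wz_inf_map_zw_eq_bot (hz : z ∘ₗ z = 0) (hwz : w ∘ₗ z + z ∘ₗ w = LinearMap.id)
    (A B : Submodule R M) : A.map (w ∘ₗ z) ⊓ B.map (z ∘ₗ w) = ⊥ :=
  ((disjoint_range_wz_range_zw hz hwz).mono map_le_range map_le_range).eq_bot

theorem disjoint_ker_ker_wz (hz : z ∘ₗ z = 0) (hwz : w ∘ₗ z + z ∘ₗ w = LinearMap.id)
    (hS : S ∘ₗ (w ∘ₗ z) + (w ∘ₗ z) ∘ₗ S = w + z) :
    Disjoint (ker S) (ker (w ∘ₗ z)) := by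
  rw [Submodule.disjoint_def]
  intro y (hSy : S y = 0) (hy : w (z y) = 0)
  have hwzy : w y + z y = 0 := by simpa [hSy, hy] using congr($hS y).symm
  have hzwy : z (w y) = y := by simpa [hy] using wz_add_zw_apply hwz y
  have hzy : z y = 0 := by rw [← hzwy, apply_apply_of_comp_eq_zero hz]
  rw [hzy, add_zero] at hwzy
  rw [← hzwy, hwzy, map_zero]

theorem disjoint_ker_ker_zw (hw : w ∘ₗ w = 0) (hwz : w ∘ₗ z + z ∘ₗ w = LinearMap.id)
    (hS : S ∘ₗ (w ∘ₗ z) + (w ∘ₗ z) ∘ₗ S = w + z) :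
    Disjoint (ker S) (ker (z ∘ₗ w)) := by
  rw [Submodule.disjoint_def]
  intro y (hSy : S y = 0) (hy : z (w y) = 0)
  have hwzy : w (z y) = y := by simpa [hy] using wz_add_zw_apply hwz y
  have hsum : w y + z y = 0 := by simpa [hSy, hwzy] using congr($hS y).symm
  have hwy : w y = 0 := by rw [← hwzy, apply_apply_of_comp_eq_zero hw]
  rw [hwy, zero_add] at hsum
  rw [← hwzy, hsum, map_zero]

end OmegaOne

theorem Submodule.rank_map_of_disjoint_ker {K : Type*} {M N : Type u} [DivisionRing K]
    [AddCommGroup M] [Module K M] [AddCommGroup N] [Module K N]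
    {g : M →ₗ[K] N} {p : Submodule K M} (h : Disjoint p (ker g)) :
    Module.rank K (p.map g) = Module.rank K p := by
  rw [← range_domRestrict]
  exact rank_range_of_injective _ (injective_domRestrict_iff.mpr h)

theorem rank_map_wz_sup_map_zw {K M : Type*} [DivisionRing K] [AddCommGroup M] [Module K M]
    {w z S : M →ₗ[K] M} (hw : w ∘ₗ w = 0) (hz : z ∘ₗ z = 0)
    (hwz : w ∘ₗ z + z ∘ₗ w = LinearMap.id)
    (hS : S ∘ₗ (w ∘ₗ z) + (w ∘ₗ z) ∘ₗ S = w + z) {Q : Submodule K M} (hQ : Q ≤ ker S) :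
    Module.rank K ↥(Q.map (w ∘ₗ z) ⊔ Q.map (z ∘ₗ w)) = 2 * Module.rank K Q := by
  have h := Submodule.rank_sup_add_rank_inf_eq (Q.map (w ∘ₗ z)) (Q.map (z ∘ₗ w))
  rwa [map_wz_inf_map_zw_eq_bot hz hwz, rank_bot, add_zero,
    Submodule.rank_map_of_disjoint_ker ((disjoint_ker_ker_wz hz hwz hS).mono_left hQ),
    Submodule.rank_map_of_disjoint_ker ((disjoint_ker_ker_zw hw hwz hS).mono_left hQ),
    ← two_mul] at h

theorem LinearMap.comp_comp_eq_of_intertwine {R M M' : Type*} [Ring R]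
    [AddCommGroup M] [Module R M] [AddCommGroup M'] [Module R M']
    {f : M →ₗ[R] M'} {a b : M →ₗ[R] M} {a' b' : M' →ₗ[R] M'}
    (ha : f ∘ₗ a = a' ∘ₗ f) (hb : f ∘ₗ b = b' ∘ₗ f) :
    f ∘ₗ (a ∘ₗ b) = (a' ∘ₗ b') ∘ₗ f := by
  rw [← comp_assoc, ha, comp_assoc, hb, comp_assoc]

theorem ker_eq_map_wz_sup_map_zw {R M M' : Type*} [Ring R]
    [AddCommGroup M] [Module R M] [AddCommGroup M'] [Module R M']
    {w z : M →ₗ[R] M} {w' z' : M' →ₗ[R] M'} {f : M →ₗ[R] M'}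
    (hz' : z' ∘ₗ z' = 0) (hwz' : w' ∘ₗ z' + z' ∘ₗ w' = LinearMap.id)
    (hfw : f ∘ₗ w = w' ∘ₗ f) (hfz : f ∘ₗ z = z' ∘ₗ f)
    {P : Submodule R M} (hP : P.map (w ∘ₗ z) ⊔ P.map (z ∘ₗ w) = ⊤)
    (hPwz : Disjoint (P.map f) (ker (w' ∘ₗ z'))) (hPzw : Disjoint (P.map f) (ker (z' ∘ₗ w'))) :
    ker f = (ker f ⊓ P).map (w ∘ₗ z) ⊔ (ker f ⊓ P).map (z ∘ₗ w) := by
  have hfwz := comp_comp_eq_of_intertwine hfw hfz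
  have hfzw := comp_comp_eq_of_intertwine hfz hfw
  refine le_antisymm (fun m hm => ?_) (sup_le ?_ ?_)
  · obtain ⟨_, ⟨a, ha, rfl⟩, _, ⟨b, hb, rfl⟩, rfl⟩ :=
      Submodule.mem_sup.mp (hP ▸ Submodule.mem_top : m ∈ P.map (w ∘ₗ z) ⊔ P.map (z ∘ₗ w))
    have hsum : (w' ∘ₗ z') (f a) = -(z' ∘ₗ w') (f b) := by
      refine eq_neg_of_add_eq_zero_left ?_
      rw [mem_ker, map_add, ← comp_apply f, ← comp_apply f, hfwz, hfzw] at hm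
      exact hm
    have hwza : (w' ∘ₗ z') (f a) = 0 :=
      Submodule.disjoint_def'.mp (disjoint_range_wz_range_zw hz' hwz') _ (mem_range_self _ _)
        _ (by rw [← map_neg]; exact mem_range_self _ _) hsum
    have hzwb : (z' ∘ₗ w') (f b) = 0 := by rw [← neg_eq_zero, ← hsum, hwza]
    have hfa : f a = 0 := Submodule.disjoint_def.mp hPwz _ (Submodule.mem_map_of_mem ha) hwza
    have hfb : f b = 0 := Submodule.disjoint_def.mp hPzw _ (Submodule.mem_map_of_mem hb) hzwb
    exact Submodule.add_mem_sup (Submodule.mem_map_of_mem ⟨hfa, ha⟩)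
      (Submodule.mem_map_of_mem ⟨hfb, hb⟩)
  · rintro _ ⟨a, ⟨ha, -⟩, rfl⟩
    rw [mem_ker, ← comp_apply f, hfwz, comp_apply, mem_ker.mp ha, map_zero]
  · rintro _ ⟨a, ⟨ha, -⟩, rfl⟩
    rw [mem_ker, ← comp_apply f, hfzw, comp_apply, mem_ker.mp ha, map_zero]

theorem stmt_12_general (V M M' : Type*)
    [AddCommGroup V] [Module (ZMod 2) V]
    [AddCommGroup M] [Module (ZMod 2) M]
    [AddCommGroup M'] [Module (ZMod 2) M']
    (w z : M →ₗ[ZMod 2] M)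
    (hz : z ∘ₗ z = 0)
    (hwz : w ∘ₗ z + z ∘ₗ w = LinearMap.id)
    (w' z' : M' →ₗ[ZMod 2] M')
    (hw' : w' ∘ₗ w' = 0) (hz' : z' ∘ₗ z' = 0)
    (hwz' : w' ∘ₗ z' + z' ∘ₗ w' = LinearMap.id)
    (k : V →ₗ[ZMod 2] M) (f : M →ₗ[ZMod 2] M')
    (S : M →ₗ[ZMod 2] M) (S' : M' →ₗ[ZMod 2] M')
    (hfw : f ∘ₗ w = w' ∘ₗ f) (hfz : f ∘ₗ z = z' ∘ₗ f)
    (hSk : ∀ x : V, S (k x) = k x)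
    (hS'f : S' ∘ₗ f + f ∘ₗ S = f)
    (hS' : S' ∘ₗ (w' ∘ₗ z') + (w' ∘ₗ z') ∘ₗ S' = w' + z')
    (hgen : (LinearMap.range k).map (w ∘ₗ z) ⊔ (LinearMap.range k).map (z ∘ₗ w) = ⊤) :
    finrank (ZMod 2) ↥(LinearMap.range f)
        = 2 * finrank (ZMod 2) ↥(LinearMap.range (f ∘ₗ k)) ∧
    (LinearMap.ker f ⊓ LinearMap.range k).map (w ∘ₗ z)
        ⊓ (LinearMap.ker f ⊓ LinearMap.range k).map (z ∘ₗ w) = ⊥ ∧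
    (LinearMap.ker f ⊓ LinearMap.range k).map (w ∘ₗ z)
        ⊔ (LinearMap.ker f ⊓ LinearMap.range k).map (z ∘ₗ w) = LinearMap.ker f := by
  have hQ : range (f ∘ₗ k) ≤ ker S' := by
    rintro _ ⟨x, rfl⟩
    simpa [hSk] using congr($hS'f (k x))
  have hrange : range f
      = (range (f ∘ₗ k)).map (w' ∘ₗ z') ⊔ (range (f ∘ₗ k)).map (z' ∘ₗ w') := by
    rw [range_comp, ← Submodule.map_top, ← hgen, Submodule.map_sup, ← Submodule.map_comp,
      ← Submodule.map_comp, comp_comp_eq_of_intertwine hfw hfz,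
      comp_comp_eq_of_intertwine hfz hfw]
    simp only [Submodule.map_comp]
  refine ⟨?_, map_wz_inf_map_zw_eq_bot hz hwz _ _, ?_⟩
  · rw [finrank, finrank, hrange, rank_map_wz_sup_map_zw hw' hz' hwz' hS' hQ,
      Cardinal.toNat_mul, Cardinal.toNat_ofNat]
  · rw [range_comp] at hQ
    exact (ker_eq_map_wz_sup_map_zw hz' hwz' hfw hfz hgen
      ((disjoint_ker_ker_wz hz' hwz' hS').mono_left hQ)
      ((disjoint_ker_ker_zw hw' hwz' hS').mono_left hQ)).symm

/-- The rank-doubling lemma: given `Ω₁`-modules `M, M'` over `𝔽₂` with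
compatible endomorphisms `S, S'`, an `Ω₁`-equivariant map `f : M → M'`, and a
map `k : V → M` whose image is fixed by `S` and generates `M` over `Ω₁`, one has
`rank f = 2 · rank (f ∘ k)`, and `ker f` is the internal direct sum of
`(w ∘ z)(K)` and `(z ∘ w)(K)` where `K = ker f ⊓ range k`. -/
theorem stmt_12 (V M M' : Type*)
    [AddCommGroup V] [Module (ZMod 2) V] [FiniteDimensional (ZMod 2) V]
    [AddCommGroup M] [Module (ZMod 2) M] [FiniteDimensional (ZMod 2) M]
    [AddCommGroup M'] [Module (ZMod 2) M'] [FiniteDimensional (ZMod 2) M']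
    (w z : M →ₗ[ZMod 2] M)
    (hw : w ∘ₗ w = 0) (hz : z ∘ₗ z = 0)
    (hwz : w ∘ₗ z + z ∘ₗ w = LinearMap.id)
    (w' z' : M' →ₗ[ZMod 2] M')
    (hw' : w' ∘ₗ w' = 0) (hz' : z' ∘ₗ z' = 0)
    (hwz' : w' ∘ₗ z' + z' ∘ₗ w' = LinearMap.id)
    (k : V →ₗ[ZMod 2] M) (f : M →ₗ[ZMod 2] M')
    (S : M →ₗ[ZMod 2] M) (S' : M' →ₗ[ZMod 2] M')
    (hfw : f ∘ₗ w = w' ∘ₗ f) (hfz : f ∘ₗ z = z' ∘ₗ f)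
    (hSk : ∀ x : V, S (k x) = k x)
    (hS'f : S' ∘ₗ f + f ∘ₗ S = f)
    (hS : S ∘ₗ (w ∘ₗ z) + (w ∘ₗ z) ∘ₗ S = w + z)
    (hS' : S' ∘ₗ (w' ∘ₗ z') + (w' ∘ₗ z') ∘ₗ S' = w' + z')
    (hgen : (LinearMap.range k).map (w ∘ₗ z) ⊔ (LinearMap.range k).map (z ∘ₗ w) = ⊤) :
    finrank (ZMod 2) ↥(LinearMap.range f)
        = 2 * finrank (ZMod 2) ↥(LinearMap.range (f ∘ₗ k)) ∧
    (LinearMap.ker f ⊓ LinearMap.range k).map (w ∘ₗ z)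
        ⊓ (LinearMap.ker f ⊓ LinearMap.range k).map (z ∘ₗ w) = ⊥ ∧
    (LinearMap.ker f ⊓ LinearMap.range k).map (w ∘ₗ z)
        ⊔ (LinearMap.ker f ⊓ LinearMap.range k).map (z ∘ₗ w) = LinearMap.ker f :=
  stmt_12_general V M M' w z hz hwz w' z' hw' hz' hwz' k f S S' hfw hfz hSk hS'f hS' hgen
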